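/- Let κ be an uncountable cardinal, X = Σ(2^κ) the Σ-product of κ copies of 2 (points with countable support), p ∈ 2^κ the constant-one function, and Y = X ∪ {p} with the subspace topology from 2^κ. Then in the G_δ-modification Y_δ of Y, the point p lies in the closure of X, but for every subset W ⊆ X with |W| < κ, p does not lie in the closure of W in Y_δ. Hence t(Y_δ) ≥ κ. -/

import Mathlib

/-!
A `G_δ` set containing `p` is determined by countably many coordinates, so it contains the
indicator of a countable set of coordinates, which lies in `Σ(2^κ)`; hence `p` is in the
`G_δ`-closure of `Σ(2^κ)`. Conversely, fewer than `κ` points of `Σ(2^κ)` have supports whose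
union misses some coordinate `a`, and the open set `{y | y a = 1}` separates `p` from them.
-/

open Cardinal Set Topology

universe u

/-- A free sequence of length `o` in the topology `t`: a transfinite sequence indexed by
the ordinals below `o` such that every initial segment's closure is disjoint from the
closure of the corresponding final segment. -/
def IsFreeSeqOn {X : Type u} (t : TopologicalSpace X) (o : Ordinal.{u})
    (x : {α : Ordinal.{u} // α < o} → X) : Prop :=
  ∀ i : {α : Ordinal.{u} // α < o},
    @closure X t (x '' {j | j < i}) ∩ @closure X t (x '' {j | i ≤ j}) = ∅

/-- The tightness of a topology: the least infinite cardinal `κ` such that whenever a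
point is in the closure of a set `A`, it is in the closure of a subset of `A` of
cardinality at most `κ`. -/
noncomputable def tightnessOf {X : Type u} (t : TopologicalSpace X) : Cardinal.{u} :=
  sInf {κ : Cardinal.{u} | ℵ₀ ≤ κ ∧ ∀ (A : Set X) (p : X), p ∈ @closure X t A →
    ∃ B ⊆ A, #↥B ≤ κ ∧ p ∈ @closure X t B}

/-- The Lindelöf number: the least infinite cardinal `κ` such that every open cover has
a subcover of cardinality at most `κ`. -/
noncomputable def lindelofNumberOf {X : Type u} (t : TopologicalSpace X) : Cardinal.{u} :=
  sInf {κ : Cardinal.{u} | ℵ₀ ≤ κ ∧ ∀ 𝒰 : Set (Set X), (∀ U ∈ 𝒰, @IsOpen X t U) →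
    ⋃₀ 𝒰 = Set.univ → ∃ 𝒱 ⊆ 𝒰, #↥𝒱 ≤ κ ∧ ⋃₀ 𝒱 = Set.univ}

/-- `F(X)`: the supremum of the cardinalities (lengths) of free sequences, at least ℵ₀. -/
noncomputable def freeNumberOf {X : Type u} (t : TopologicalSpace X) : Cardinal.{u} :=
  ℵ₀ ⊔ sSup {c : Cardinal.{u} |
    ∃ x : {α : Ordinal.{u} // α < c.ord} → X, IsFreeSeqOn t c.ord x}

/-- The G_δ-modification: the topology generated by the G_δ-subsets. -/
def gDelta {X : Type u} (t : TopologicalSpace X) : TopologicalSpace X :=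
  TopologicalSpace.generateFrom {s : Set X | @IsGδ X t s}

/-- `Cl_κ`-Lindelöf: every open `Cl_κ`-cover of any subset `W` contains a countable
subfamily covering `W`. -/
def ClLindelofOf {X : Type u} (t : TopologicalSpace X) (κ : Cardinal.{u}) : Prop :=
  ∀ (W : Set X) (𝒰 : Set (Set X)), (∀ U ∈ 𝒰, @IsOpen X t U) →
    (∀ C ⊆ W, #↥C ≤ κ → ∃ U ∈ 𝒰, @closure X t C ⊆ U) →
    ∃ 𝒱 ⊆ 𝒰, 𝒱.Countable ∧ W ⊆ ⋃₀ 𝒱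

/-- The Σ-product of `ι`-many copies of `Bool` together with the constant-`true`
function, as a set of the product `ι → Bool`. -/
def YSet (ι : Type u) : Set (ι → Bool) :=
  {x | (x ⁻¹' {true}).Countable ∨ x = fun _ => true}

/-- The constant-one point `p`. -/
def ptOne (ι : Type u) : ↥(YSet ι) := ⟨fun _ => true, Or.inr rfl⟩

/-- The Σ-product part `X = Σ(2^ι)` inside `Y`. -/
def sigmaPart (ι : Type u) : Set ↥(YSet ι) := {y | (y.1 ⁻¹' {true}).Countable}

open Topology TopologicalSpace Filter

section GDeltaModification

variable {X : Type u} {t : TopologicalSpace X}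

lemma gDelta_nhds_basis_isGδ (x : X) :
    (@nhds X (gDelta t) x).HasBasis (fun G => x ∈ G ∧ @IsGδ X t G) id := by
  rw [gDelta, nhds_generateFrom]
  refine hasBasis_biInf_principal' (fun G hG H hH => ⟨G ∩ H, ⟨⟨hG.1, hH.1⟩, hG.2.inter hH.2⟩,
    inter_subset_left, inter_subset_right⟩) ⟨univ, mem_univ x, IsGδ.univ⟩

lemma mem_closure_gDelta_iff {s : Set X} {x : X} :
    x ∈ @closure X (gDelta t) s ↔ ∀ G, @IsGδ X t G → x ∈ G → (G ∩ s).Nonempty :=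
  (@mem_closure_iff_nhds_basis' X (gDelta t) _ _ _ _ _ (gDelta_nhds_basis_isGδ x)).trans
    ⟨fun h G hG hx => h G ⟨hx, hG⟩, fun h G hG => h G hG.2 hG.1⟩

end GDeltaModification

lemma le_tightnessOf {X : Type u} {t : TopologicalSpace X} {κ : Cardinal.{u}} {A : Set X}
    {x : X} (hA : x ∈ @closure X t A) (hsmall : ∀ B ⊆ A, #B < κ → x ∉ @closure X t B) :
    κ ≤ tightnessOf t := by
  refine le_csInf ⟨ℵ₀ ⊔ #X, le_sup_left, fun A x hx =>
    ⟨A, subset_rfl, (mk_set_le A).trans le_sup_right, hx⟩⟩ ?_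
  rintro μ ⟨-, hμ⟩
  by_contra! hμκ
  obtain ⟨B, hBA, hBμ, hxB⟩ := hμ A x hA
  exact hsmall B hBA (hBμ.trans_lt hμκ) hxB

section ProductCoordinates

variable {ι : Type*} {π : ι → Type*} [∀ i, TopologicalSpace (π i)] {Y : Type*}
  [TopologicalSpace Y] {f : Y → ∀ i, π i}

lemma Topology.IsInducing.exists_finset_forall_apply_eq_mem (hf : IsInducing f) {U : Set Y}
    (hU : IsOpen U) {x : Y} (hx : x ∈ U) :
    ∃ I : Finset ι, ∀ y, (∀ i ∈ I, f y i = f x i) → y ∈ U := by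
  obtain ⟨V, hV, rfl⟩ := hf.isOpen_iff.mp hU
  obtain ⟨I, u, hu, hIu⟩ := isOpen_pi_iff.mp hV _ hx
  exact ⟨I, fun y hy => hIu fun i hi => (hy i hi).symm ▸ (hu i hi).2⟩

lemma Topology.IsInducing.exists_countable_forall_apply_eq_mem (hf : IsInducing f) {G : Set Y}
    (hG : IsGδ G) {x : Y} (hx : x ∈ G) :
    ∃ S : Set ι, S.Countable ∧ ∀ y, (∀ i ∈ S, f y i = f x i) → y ∈ G := by
  obtain ⟨T, hTo, hTc, rfl⟩ := hG
  have hxT : ∀ U ∈ T, x ∈ U := fun U hU => mem_sInter.mp hx U hU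
  choose I hI using fun U (hU : U ∈ T) => hf.exists_finset_forall_apply_eq_mem (hTo U hU) (hxT U hU)
  refine ⟨⋃ U ∈ T, ↑(I U ‹_›), hTc.biUnion fun U hU => (I U hU).countable_toSet, ?_⟩
  exact fun y hy => mem_sInter.mpr fun U hU =>
    hI U hU y fun i hi => hy i (mem_iUnion₂.mpr ⟨U, hU, hi⟩)

end ProductCoordinates

lemma mk_biUnion_lt_of_countable {α β : Type u} {κ : Cardinal.{u}} (hκ : ℵ₀ < κ) {W : Set β}
    (hW : #W < κ) {A : β → Set α} (hA : ∀ w ∈ W, (A w).Countable) : #(⋃ w ∈ W, A w) < κ :=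
  calc #(⋃ w ∈ W, A w) ≤ #W * ⨆ w : W, #(A w) := mk_biUnion_le A W
    _ ≤ #W * ℵ₀ := by gcongr; exact ciSup_le' fun w => (hA w.1 w.2).le_aleph0
    _ ≤ #W ⊔ ℵ₀ ⊔ ℵ₀ := mul_le_max _ _
    _ < κ := max_lt (max_lt hW hκ) hκ

section SigmaProduct

variable {ι : Type u}

lemma isGδ_inter_sigmaPart_nonempty {G : Set (YSet ι)} (hG : IsGδ G) (hp : ptOne ι ∈ G) :
    (G ∩ sigmaPart ι).Nonempty := by
  classical
  obtain ⟨S, hS, hSG⟩ := IsInducing.subtypeVal.exists_countable_forall_apply_eq_mem hG hp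
  have hsupp : (fun a => decide (a ∈ S)) ⁻¹' {true} = S := by ext; simp
  have hy : (fun a => decide (a ∈ S)) ⁻¹' {true} |>.Countable := hsupp.symm ▸ hS
  exact ⟨⟨_, Or.inl hy⟩, hSG _ fun a ha => by simp [ptOne, ha], hy⟩

lemma ptOne_mem_closure_sigmaPart :
    ptOne ι ∈ @closure _ (gDelta inferInstance) (sigmaPart ι) :=
  mem_closure_gDelta_iff.mpr fun _ hG hp => isGδ_inter_sigmaPart_nonempty hG hp

lemma ptOne_notMem_closure_of_mk_lt (hι : ℵ₀ < #ι) {W : Set (YSet ι)} (hWσ : W ⊆ sigmaPart ι)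
    (hW : #W < #ι) : ptOne ι ∉ @closure _ (gDelta inferInstance) W := by
  obtain ⟨a, ha⟩ := compl_nonempty_of_mk_lt_mk
    (mk_biUnion_lt_of_countable hι hW hWσ)
  have hopen : IsOpen {y : YSet ι | y.1 a = true} :=
    (isOpen_discrete {true}).preimage ((continuous_apply a).comp continuous_subtype_val :
      Continuous fun y : YSet ι => y.1 a)
  rw [mem_closure_gDelta_iff]
  intro h
  obtain ⟨w, hwa, hwW⟩ := h _ hopen.isGδ rfl
  exact ha (mem_biUnion hwW hwa)

end SigmaProduct

/-- in the `G_δ`-modification of `Y = Σ(2^κ) ∪ {p}`, the point `p` is in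
the closure of `Σ(2^κ)` but not in the closure of any subset of it of size `< κ`; hence
`t(Y_δ) ≥ κ`. -/
theorem statement7 {ι : Type u} (hι : ℵ₀ < #ι) :
    ptOne ι ∈ @closure _ (gDelta (inferInstance : TopologicalSpace ↥(YSet ι)))
        (sigmaPart ι) ∧
      (∀ W ⊆ sigmaPart ι, #↥W < #ι →
        ptOne ι ∉ @closure _ (gDelta (inferInstance : TopologicalSpace ↥(YSet ι))) W) ∧
      #ι ≤ tightnessOf (gDelta (inferInstance : TopologicalSpace ↥(YSet ι))) :=
  ⟨ptOne_mem_closure_sigmaPart, fun _ hWσ hW => ptOne_notMem_closure_of_mk_lt hι hWσ hW,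
    le_tightnessOf ptOne_mem_closure_sigmaPart fun _ hBσ hB =>
      ptOne_notMem_closure_of_mk_lt hι hBσ hB⟩
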